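/- Let m ≥ 3 be an odd integer and let Ŵ⁺ be the group with presentation ⟨z, s₀, s₁, s_m | z² = s₀² = s₁² = s_m² = (s₁s_m)^m = 1, (s₀s₁)² = (s₀s_m)² = z, z s_i = s_i z for i ∈ {0,1,m}⟩. Then Ŵ⁺ is a finite group of order 8m. -/
import Mathlib


/-- Generators of the double covering of `W = ℤ₂ × D_{2m}`: the central element `z`
and the lifted reflections `s₀`, `s₁`, `s_m`. -/
inductive Gen : Type
  | z | s0 | s1 | sm
deriving DecidableEq

open FreeGroup

/-- Relators of the positive double covering `Ŵ⁺` of `ℤ₂ × D_{2m}` for odd `m`: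
`z² = s₀² = s₁² = s_m² = (s₁s_m)^m = 1`, `(s₀s₁)² = (s₀s_m)² = z`,
and `z` commutes with the generators. -/
def relsOddPos (m : ℕ) : Set (FreeGroup Gen) :=
  { (of Gen.z) ^ 2, (of Gen.s0) ^ 2, (of Gen.s1) ^ 2, (of Gen.sm) ^ 2,
    (of Gen.s1 * of Gen.sm) ^ m,
    (of Gen.s0 * of Gen.s1) ^ 2 * (of Gen.z)⁻¹,
    (of Gen.s0 * of Gen.sm) ^ 2 * (of Gen.z)⁻¹,
    of Gen.z * of Gen.s0 * (of Gen.z)⁻¹ * (of Gen.s0)⁻¹,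
    of Gen.z * of Gen.s1 * (of Gen.z)⁻¹ * (of Gen.s1)⁻¹,
    of Gen.z * of Gen.sm * (of Gen.z)⁻¹ * (of Gen.sm)⁻¹ }

namespace WposOddAux

open Multiplicative DihedralGroup

abbrev MM := Multiplicative (ZMod 2)

def chiFun {m : ℕ} : DihedralGroup m → MM
  | .r _ => 1
  | .sr _ => Multiplicative.ofAdd 1

def chi {m : ℕ} : DihedralGroup m →* MM where
  toFun := chiFun
  map_one' := rfl
  map_mul' x y := by
    cases x <;> cases y <;>
      simp only [r_mul_r, r_mul_sr, sr_mul_r, sr_mul_sr, chiFun] <;> decide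

end WposOddAux

namespace WposOddAux

open Multiplicative

lemma mm_sq (x : MM) : x * x = 1 := by revert x; decide

def alpha (m : ℕ) : (MM × DihedralGroup m) ≃* (MM × DihedralGroup m) where
  toFun p := (p.1 * chi p.2, p.2)
  invFun p := (p.1 * chi p.2, p.2)
  left_inv p := by
    cases p with
    | mk e d => simp [mul_assoc, mm_sq]
  right_inv p := by
    cases p with
    | mk e d => simp [mul_assoc, mm_sq]
  map_mul' p q := by
    cases p with
    | mk e d =>
      cases q with
      | mk e' d' =>
        dsimp only
        rw [Prod.mk_mul_mk, Prod.mk_mul_mk, Prod.fst, Prod.snd, map_mul chi d d', Prod.mk.injEq]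
        exact ⟨mul_mul_mul_comm e e' (chi d) (chi d'), rfl⟩

@[simp] lemma alpha_apply (m : ℕ) (p : MM × DihedralGroup m) :
    alpha m p = (p.1 * chi p.2, p.2) := rfl

def phi (m : ℕ) : MM →* MulAut (MM × DihedralGroup m) where
  toFun x := if x = 1 then 1 else alpha m
  map_one' := if_pos rfl
  map_mul' x y := by
    show (if x * y = 1 then 1 else alpha m) =
      (if x = 1 then 1 else alpha m) * (if y = 1 then 1 else alpha m)
    have ha : alpha m * alpha m = 1 := by
      apply MulEquiv.ext
      intro p
      show alpha m (alpha m p) = p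
      simp [mul_assoc, mm_sq]
    have hg : (ofAdd (1 : ZMod 2) : MM) ≠ 1 := by decide
    have hcases : ∀ u : MM, u = 1 ∨ u = ofAdd 1 := by decide
    rcases hcases x with rfl | rfl <;> rcases hcases y with rfl | rfl
    · simp
    · simp [hg]
    · simp [hg]
    · rw [mm_sq, if_pos rfl, if_neg hg, ha]

@[simp] lemma phi_one (m : ℕ) : phi m 1 = 1 := map_one _

@[simp] lemma phi_g (m : ℕ) : phi m (ofAdd 1) = alpha m := by
  show (if (ofAdd (1 : ZMod 2) : MM) = 1 then 1 else alpha m) = alpha m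
  rw [if_neg (by decide : (ofAdd (1 : ZMod 2) : MM) ≠ 1)]

end WposOddAux

namespace WposOddAux

open Multiplicative DihedralGroup SemidirectProduct

@[simp] lemma chi_r {m : ℕ} (i : ZMod m) : chi (DihedralGroup.r i) = 1 := rfl
@[simp] lemma chi_sr {m : ℕ} (i : ZMod m) : chi (DihedralGroup.sr i) = ofAdd 1 := rfl

abbrev Gt (m : ℕ) := SemidirectProduct (MM × DihedralGroup m) MM (phi m)

def fGen (m : ℕ) : Gen → Gt m
  | Gen.z => inl (ofAdd 1, 1)
  | Gen.s0 => inr (ofAdd 1)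
  | Gen.s1 => inl (1, DihedralGroup.sr 0)
  | Gen.sm => inl (1, DihedralGroup.sr 1)

lemma fGen_z_sq (m : ℕ) : fGen m Gen.z ^ 2 = 1 := by
  rw [show fGen m Gen.z = inl (ofAdd 1, 1) from rfl, ← map_pow]
  have h : ((ofAdd 1 : MM), (1 : DihedralGroup m)) ^ 2 = 1 := by
    rw [sq, Prod.mk_mul_mk, mm_sq, mul_one]; rfl
  rw [h]; exact map_one inl

lemma fGen_s0_sq (m : ℕ) : fGen m Gen.s0 ^ 2 = 1 := by
  rw [show fGen m Gen.s0 = (inr (ofAdd 1) : Gt m) from rfl, ← map_pow, sq, mm_sq]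
  exact map_one inr

lemma sr_sq {m : ℕ} (i : ZMod m) :
    ((1 : MM), (DihedralGroup.sr i : DihedralGroup m)) ^ 2 = 1 := by
  rw [sq, Prod.mk_mul_mk, sr_mul_sr, one_mul, sub_self]; rfl

lemma fGen_s1_sq (m : ℕ) : fGen m Gen.s1 ^ 2 = 1 := by
  rw [show fGen m Gen.s1 = inl ((1 : MM), DihedralGroup.sr 0) from rfl, ← map_pow, sr_sq]
  exact map_one inl

lemma fGen_sm_sq (m : ℕ) : fGen m Gen.sm ^ 2 = 1 := by
  rw [show fGen m Gen.sm = inl ((1 : MM), DihedralGroup.sr 1) from rfl, ← map_pow, sr_sq]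
  exact map_one inl

lemma fGen_rot (m : ℕ) : fGen m Gen.s1 * fGen m Gen.sm = inl (1, DihedralGroup.r 1) := by
  rw [show fGen m Gen.s1 = inl ((1 : MM), DihedralGroup.sr 0) from rfl,
    show fGen m Gen.sm = inl ((1 : MM), DihedralGroup.sr 1) from rfl,
    ← _root_.map_mul inl ((1 : MM), DihedralGroup.sr 0) ((1 : MM), DihedralGroup.sr 1),
    Prod.mk_mul_mk, sr_mul_sr, one_mul, sub_zero]

lemma fGen_rot_pow (m : ℕ) : (fGen m Gen.s1 * fGen m Gen.sm) ^ m = 1 := by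
  rw [fGen_rot, ← map_pow]
  have h : ((1 : MM), (DihedralGroup.r 1 : DihedralGroup m)) ^ m = 1 := by
    rw [Prod.pow_mk, one_pow, r_one_pow, ZMod.natCast_self]; rfl
  rw [h]; exact map_one inl

lemma fGen_zs1 (m : ℕ) : (fGen m Gen.s0 * fGen m Gen.s1) ^ 2 = fGen m Gen.z := by
  show ((⟨(1,1), ofAdd 1⟩ : Gt m) * ⟨(1, DihedralGroup.sr 0), 1⟩) ^ 2 = ⟨(ofAdd 1, 1), 1⟩
  rw [sq, mul_def, mul_def]
  simp [mm_sq, sr_mul_sr, mul_assoc]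

lemma fGen_zsm (m : ℕ) : (fGen m Gen.s0 * fGen m Gen.sm) ^ 2 = fGen m Gen.z := by
  show ((⟨(1,1), ofAdd 1⟩ : Gt m) * ⟨(1, DihedralGroup.sr 1), 1⟩) ^ 2 = ⟨(ofAdd 1, 1), 1⟩
  rw [sq, mul_def, mul_def]
  simp [mm_sq, sr_mul_sr, mul_assoc]

lemma fGen_z_comm (m : ℕ) (g : Gen) : fGen m Gen.z * fGen m g = fGen m g * fGen m Gen.z := by
  cases g <;> simp only [fGen] <;>
    ext <;>
      simp [mul_left, mul_right, left_inl, right_inl, left_inr, right_inr,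
        Prod.ext_iff, mul_comm]

end WposOddAux

namespace WposOddAux

open Multiplicative DihedralGroup SemidirectProduct

lemma fGen_rels (m : ℕ) : ∀ r ∈ relsOddPos m, FreeGroup.lift (fGen m) r = 1 := by
  intro r hr
  simp only [relsOddPos, Set.mem_insert_iff, Set.mem_singleton_iff] at hr
  rcases hr with rfl | rfl | rfl | rfl | rfl | rfl | rfl | rfl | rfl | rfl
  · rw [map_pow, FreeGroup.lift_apply_of]; exact fGen_z_sq m
  · rw [map_pow, FreeGroup.lift_apply_of]; exact fGen_s0_sq m
  · rw [map_pow, FreeGroup.lift_apply_of]; exact fGen_s1_sq m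
  · rw [map_pow, FreeGroup.lift_apply_of]; exact fGen_sm_sq m
  · rw [map_pow, _root_.map_mul, FreeGroup.lift_apply_of, FreeGroup.lift_apply_of]; exact fGen_rot_pow m
  · rw [_root_.map_mul, map_pow, _root_.map_mul, _root_.map_inv, FreeGroup.lift_apply_of, FreeGroup.lift_apply_of,
      FreeGroup.lift_apply_of, fGen_zs1]
    exact mul_inv_cancel _
  · rw [_root_.map_mul, map_pow, _root_.map_mul, _root_.map_inv, FreeGroup.lift_apply_of, FreeGroup.lift_apply_of,
      FreeGroup.lift_apply_of, fGen_zsm]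
    exact mul_inv_cancel _
  · simp only [_root_.map_mul, _root_.map_inv, FreeGroup.lift_apply_of]
    rw [fGen_z_comm m Gen.s0]; group
  · simp only [_root_.map_mul, _root_.map_inv, FreeGroup.lift_apply_of]
    rw [fGen_z_comm m Gen.s1]; group
  · simp only [_root_.map_mul, _root_.map_inv, FreeGroup.lift_apply_of]
    rw [fGen_z_comm m Gen.sm]; group

def piH (m : ℕ) : PresentedGroup (relsOddPos m) →* Gt m :=
  PresentedGroup.toGroup (fGen_rels m)

lemma piH_surj (m : ℕ) [NeZero m] : Function.Surjective (piH m) := by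
  rw [← MonoidHom.range_eq_top, Subgroup.eq_top_iff']
  have hz : inl ((ofAdd 1 : MM), (1 : DihedralGroup m)) ∈ (piH m).range :=
    ⟨PresentedGroup.of Gen.z, by simp [piH, fGen]⟩
  have h0 : (inr (ofAdd 1) : Gt m) ∈ (piH m).range :=
    ⟨PresentedGroup.of Gen.s0, by simp [piH, fGen]⟩
  have h1 : inl ((1 : MM), (DihedralGroup.sr 0 : DihedralGroup m)) ∈ (piH m).range :=
    ⟨PresentedGroup.of Gen.s1, by simp [piH, fGen]⟩
  have hm : inl ((1 : MM), (DihedralGroup.sr 1 : DihedralGroup m)) ∈ (piH m).range :=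
    ⟨PresentedGroup.of Gen.sm, by simp [piH, fGen]⟩
  have hrot : ∀ k : ZMod m, inl ((1 : MM), (DihedralGroup.r k : DihedralGroup m))
      ∈ (piH m).range := by
    intro k
    have hk : (inl ((1 : MM), (DihedralGroup.r 1 : DihedralGroup m)) : Gt m) ^ k.val
        = inl (1, DihedralGroup.r k) := by
      rw [← map_pow, Prod.pow_mk, one_pow, r_one_pow, ZMod.natCast_zmod_val]
    have hmem : (inl ((1 : MM), (DihedralGroup.r 1 : DihedralGroup m)) : Gt m)
        ∈ (piH m).range := by
      rw [← fGen_rot]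
      exact mul_mem h1 hm
    exact hk ▸ pow_mem hmem k.val
  have hsr : ∀ k : ZMod m, inl ((1 : MM), (DihedralGroup.sr k : DihedralGroup m))
      ∈ (piH m).range := by
    intro k
    have hk : inl ((1 : MM), (DihedralGroup.sr 0 : DihedralGroup m))
        * (inl ((1 : MM), DihedralGroup.r k) : Gt m) = inl (1, DihedralGroup.sr k) := by
      rw [← _root_.map_mul inl, Prod.mk_mul_mk, one_mul, sr_mul_r, zero_add]
    exact hk ▸ mul_mem h1 (hrot k)
  have hd : ∀ d : DihedralGroup m, inl ((1 : MM), d) ∈ (piH m).range := by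
    rintro (k | k)
    exacts [hrot k, hsr k]
  have he : ∀ e : MM, inl ((e : MM), (1 : DihedralGroup m)) ∈ (piH m).range := by
    intro e
    rcases (by decide : ∀ u : MM, u = 1 ∨ u = ofAdd 1) e with rfl | rfl
    · rw [show ((1 : MM), (1 : DihedralGroup m)) = 1 from rfl, _root_.map_one]
      exact one_mem _
    · exact hz
  have ha : ∀ a : MM, (inr a : Gt m) ∈ (piH m).range := by
    intro a
    rcases (by decide : ∀ u : MM, u = 1 ∨ u = ofAdd 1) a with rfl | rfl
    · rw [_root_.map_one]; exact one_mem _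
    · exact h0
  rintro ⟨⟨e, d⟩, a⟩
  have hx : (⟨(e, d), a⟩ : Gt m) = inl (e, 1) * inl (1, d) * inr a := by
    rw [← _root_.map_mul inl, Prod.mk_mul_mk, one_mul, mul_one]
    exact mk_eq_inl_mul_inr a (e, d)
  rw [hx]
  exact mul_mem (mul_mem (he e) (hd d)) (ha a)

lemma card_Gt (m : ℕ) [NeZero m] : Nat.card (Gt m) = 8 * m := by
  have e : Gt m ≃ (MM × DihedralGroup m) × MM :=
    ⟨fun x => (x.left, x.right), fun p => ⟨p.1, p.2⟩, fun _ => rfl, fun _ => rfl⟩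
  rw [Nat.card_congr e, Nat.card_prod, Nat.card_prod]
  have h2 : Nat.card MM = 2 := by
    rw [Nat.card_congr (Multiplicative.toAdd (α := ZMod 2)), Nat.card_zmod]
  rw [h2, DihedralGroup.nat_card]
  ring

end WposOddAux

namespace WposOddAux

abbrev P (m : ℕ) := PresentedGroup (relsOddPos m)

def Zc (m : ℕ) : P m := PresentedGroup.of Gen.z
def S0c (m : ℕ) : P m := PresentedGroup.of Gen.s0
def S1c (m : ℕ) : P m := PresentedGroup.of Gen.s1
def Smc (m : ℕ) : P m := PresentedGroup.of Gen.sm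
def Rc (m : ℕ) : P m := S1c m * Smc m

lemma relc (m : ℕ) {r : FreeGroup Gen} (hr : r ∈ relsOddPos m) :
    PresentedGroup.mk (relsOddPos m) r = 1 :=
  (QuotientGroup.eq_one_iff r).mpr (Subgroup.subset_normalClosure hr)

lemma z_sq' (m : ℕ) : Zc m ^ 2 = 1 := by
  have h := relc m (show (of Gen.z) ^ 2 ∈ relsOddPos m by simp [relsOddPos])
  rwa [map_pow] at h

lemma s0_sq' (m : ℕ) : S0c m ^ 2 = 1 := by
  have h := relc m (show (of Gen.s0) ^ 2 ∈ relsOddPos m by simp [relsOddPos])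
  rwa [map_pow] at h

lemma s1_sq' (m : ℕ) : S1c m ^ 2 = 1 := by
  have h := relc m (show (of Gen.s1) ^ 2 ∈ relsOddPos m by simp [relsOddPos])
  rwa [map_pow] at h

lemma sm_sq' (m : ℕ) : Smc m ^ 2 = 1 := by
  have h := relc m (show (of Gen.sm) ^ 2 ∈ relsOddPos m by simp [relsOddPos])
  rwa [map_pow] at h

lemma rot_pow' (m : ℕ) : Rc m ^ m = 1 := by
  have h := relc m (show (of Gen.s1 * of Gen.sm) ^ m ∈ relsOddPos m by simp [relsOddPos])
  rwa [map_pow, _root_.map_mul] at h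

lemma h01 (m : ℕ) : (S0c m * S1c m) ^ 2 = Zc m := by
  have h := relc m
    (show (of Gen.s0 * of Gen.s1) ^ 2 * (of Gen.z)⁻¹ ∈ relsOddPos m by simp [relsOddPos])
  rw [_root_.map_mul, map_pow, _root_.map_mul, _root_.map_inv] at h
  exact mul_inv_eq_one.mp h

lemma h0m (m : ℕ) : (S0c m * Smc m) ^ 2 = Zc m := by
  have h := relc m
    (show (of Gen.s0 * of Gen.sm) ^ 2 * (of Gen.z)⁻¹ ∈ relsOddPos m by simp [relsOddPos])
  rw [_root_.map_mul, map_pow, _root_.map_mul, _root_.map_inv] at h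
  exact mul_inv_eq_one.mp h

lemma commz0 (m : ℕ) : Zc m * S0c m = S0c m * Zc m := by
  have h := relc m
    (show of Gen.z * of Gen.s0 * (of Gen.z)⁻¹ * (of Gen.s0)⁻¹ ∈ relsOddPos m by
      simp [relsOddPos])
  simp only [_root_.map_mul, _root_.map_inv] at h
  rw [← commutatorElement_def] at h
  exact commutatorElement_eq_one_iff_mul_comm.mp h

lemma commz1 (m : ℕ) : Zc m * S1c m = S1c m * Zc m := by
  have h := relc m
    (show of Gen.z * of Gen.s1 * (of Gen.z)⁻¹ * (of Gen.s1)⁻¹ ∈ relsOddPos m by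
      simp [relsOddPos])
  simp only [_root_.map_mul, _root_.map_inv] at h
  rw [← commutatorElement_def] at h
  exact commutatorElement_eq_one_iff_mul_comm.mp h

lemma commzm (m : ℕ) : Zc m * Smc m = Smc m * Zc m := by
  have h := relc m
    (show of Gen.z * of Gen.sm * (of Gen.z)⁻¹ * (of Gen.sm)⁻¹ ∈ relsOddPos m by
      simp [relsOddPos])
  simp only [_root_.map_mul, _root_.map_inv] at h
  rw [← commutatorElement_def] at h
  exact commutatorElement_eq_one_iff_mul_comm.mp h

lemma z_inv (m : ℕ) : (Zc m)⁻¹ = Zc m :=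
  inv_eq_of_mul_eq_one_left (by rw [← sq]; exact z_sq' m)

lemma s0_inv (m : ℕ) : (S0c m)⁻¹ = S0c m :=
  inv_eq_of_mul_eq_one_left (by rw [← sq]; exact s0_sq' m)

lemma s1_inv (m : ℕ) : (S1c m)⁻¹ = S1c m :=
  inv_eq_of_mul_eq_one_left (by rw [← sq]; exact s1_sq' m)

lemma sm_inv (m : ℕ) : (Smc m)⁻¹ = Smc m :=
  inv_eq_of_mul_eq_one_left (by rw [← sq]; exact sm_sq' m)

lemma key1 (m : ℕ) : S1c m * S0c m = Zc m * (S0c m * S1c m) := by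
  have e1 : S1c m * S0c m = (S0c m)⁻¹ * (S0c m * S1c m) ^ 2 * (S1c m)⁻¹ := by rw [sq]; group
  rw [h01, s0_inv, s1_inv, ← commz0, mul_assoc] at e1
  exact e1

lemma keym (m : ℕ) : Smc m * S0c m = Zc m * (S0c m * Smc m) := by
  have e1 : Smc m * S0c m = (S0c m)⁻¹ * (S0c m * Smc m) ^ 2 * (Smc m)⁻¹ := by rw [sq]; group
  rw [h0m, s0_inv, sm_inv, ← commz0, mul_assoc] at e1
  exact e1

lemma commzR (m : ℕ) : Zc m * Rc m = Rc m * Zc m := by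
  rw [Rc, ← mul_assoc, commz1, mul_assoc, commzm, ← mul_assoc]

lemma commR0 (m : ℕ) : Rc m * S0c m = S0c m * Rc m := by
  calc Rc m * S0c m = S1c m * (Smc m * S0c m) := by rw [Rc, mul_assoc]
    _ = S1c m * (Zc m * (S0c m * Smc m)) := by rw [keym]
    _ = (S1c m * Zc m) * (S0c m * Smc m) := by rw [mul_assoc]
    _ = (Zc m * S1c m) * (S0c m * Smc m) := by rw [commz1]
    _ = Zc m * ((S1c m * S0c m) * Smc m) := by group
    _ = Zc m * ((Zc m * (S0c m * S1c m)) * Smc m) := by rw [key1]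
    _ = (Zc m * Zc m) * (S0c m * (S1c m * Smc m)) := by group
    _ = 1 * (S0c m * (S1c m * Smc m)) := by rw [← sq, z_sq']
    _ = S0c m * Rc m := by rw [one_mul, Rc]

end WposOddAux

namespace WposOddAux

lemma smc_eq (m : ℕ) (hm : 1 ≤ m) : Rc m ^ (m - 1) * S1c m = Smc m := by
  have hinv : Rc m ^ (m - 1) = (Rc m)⁻¹ := by
    apply eq_inv_of_mul_eq_one_left
    rw [← pow_succ, Nat.sub_add_cancel hm, rot_pow']
  rw [hinv, Rc, mul_inv_rev, mul_assoc, inv_mul_cancel, mul_one, sm_inv]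

lemma s1R (m : ℕ) (hm : 1 ≤ m) : S1c m * Rc m = Rc m ^ (m - 1) * S1c m := by
  rw [smc_eq m hm, Rc, ← mul_assoc, ← sq, s1_sq', one_mul]

lemma mv {G : Type*} [Group G] {u v : G} (h : Commute u v) (n : ℕ) (x : G) :
    u * (v ^ n * x) = v ^ n * (u * x) := by
  rw [← mul_assoc, (h.pow_right n).eq, mul_assoc]

lemma mv1 {G : Type*} [Group G] {u v : G} (h : Commute u v) (n : ℕ) (x : G) :
    u ^ n * (v * x) = v * (u ^ n * x) := by
  rw [← mul_assoc, (h.pow_left n).eq, mul_assoc]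

lemma mv2 {G : Type*} [Group G] {u v : G} (h : Commute u v) (i n : ℕ) (x : G) :
    u ^ i * (v ^ n * x) = v ^ n * (u ^ i * x) := by
  rw [← mul_assoc, (h.pow_pow i n).eq, mul_assoc]

lemma L2' (m : ℕ) : ∀ (b : ℕ) (x : P m),
    S1c m * (S0c m ^ b * x) = Zc m ^ b * (S0c m ^ b * (S1c m * x)) := by
  intro b
  induction b with
  | zero => intro x; simp
  | succ b ih =>
    intro x
    have e : ∀ y : P m, S1c m * (S0c m * y) = Zc m * (S0c m * (S1c m * y)) := by
      intro y
      rw [← mul_assoc, key1, mul_assoc, mul_assoc]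
    rw [pow_succ, mul_assoc, ih (S0c m * x), e,
      mv1 (show Commute (S0c m) (Zc m) from (commz0 m).symm) b,
      ← mul_assoc (Zc m ^ b), ← pow_succ,
      ← mul_assoc (S0c m ^ b), ← pow_succ]

lemma L1' (m : ℕ) (hm : 1 ≤ m) : ∀ (k : ℕ) (x : P m),
    S1c m * (Rc m ^ k * x) = Rc m ^ ((m - 1) * k) * (S1c m * x) := by
  intro k
  induction k with
  | zero => intro x; simp
  | succ k ih =>
    intro x
    rw [pow_succ, mul_assoc, ih (Rc m * x), ← mul_assoc (S1c m), s1R m hm,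
      mul_assoc, ← mul_assoc (Rc m ^ ((m - 1) * k)), ← pow_add,
      show (m - 1) * k + (m - 1) = (m - 1) * (k + 1) by ring]

def F (m : ℕ) (a b k c : ℕ) : P m :=
  Zc m ^ a * (S0c m ^ b * (Rc m ^ k * S1c m ^ c))

lemma ruleZ (m : ℕ) (a b k c : ℕ) : Zc m * F m a b k c = F m (a + 1) b k c := by
  rw [F, F, ← mul_assoc, ← pow_succ']

lemma ruleS0 (m : ℕ) (a b k c : ℕ) : S0c m * F m a b k c = F m a (b + 1) k c := by
  rw [F, F, mv (show Commute (S0c m) (Zc m) from (commz0 m).symm) a,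
    ← mul_assoc (S0c m), ← pow_succ']

lemma ruleS1 (m : ℕ) (hm : 1 ≤ m) (a b k c : ℕ) :
    S1c m * F m a b k c = F m (a + b) b ((m - 1) * k) (c + 1) := by
  rw [F, F, mv (show Commute (S1c m) (Zc m) from (commz1 m).symm) a,
    L2' m b, L1' m hm k, ← pow_succ', ← mul_assoc, ← pow_add]

lemma ruleSm (m : ℕ) (hm : 1 ≤ m) (a b k c : ℕ) :
    Smc m * F m a b k c = F m (a + b) b ((m - 1) + (m - 1) * k) (c + 1) := by
  rw [show Smc m * F m a b k c = Rc m ^ (m - 1) * (S1c m * F m a b k c) by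
      rw [← mul_assoc, smc_eq m hm],
    ruleS1 m hm, F, F, mv2 (show Commute (Rc m) (Zc m) from (commzR m).symm) (m - 1) (a + b),
    mv2 (show Commute (Rc m) (S0c m) from commR0 m) (m - 1) b,
    ← mul_assoc (Rc m ^ (m - 1)), ← pow_add]

lemma span (m : ℕ) (hm : 1 ≤ m) (x : P m) : ∃ a b k c : ℕ, x = F m a b k c := by
  have hx : x ∈ Subgroup.closure (Set.range (PresentedGroup.of : Gen → P m)) := by
    rw [PresentedGroup.closure_range_of]
    exact Subgroup.mem_top x
  induction hx using Subgroup.closure_induction_left with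
  | one => exact ⟨0, 0, 0, 0, by simp [F]⟩
  | mul_left g hg y hy ih =>
    obtain ⟨a, b, k, c, rfl⟩ := ih
    obtain ⟨i, rfl⟩ := hg
    cases i with
    | z => exact ⟨a + 1, b, k, c, ruleZ m a b k c⟩
    | s0 => exact ⟨a, b + 1, k, c, ruleS0 m a b k c⟩
    | s1 => exact ⟨a + b, b, (m - 1) * k, c + 1, ruleS1 m hm a b k c⟩
    | sm => exact ⟨a + b, b, (m - 1) + (m - 1) * k, c + 1, ruleSm m hm a b k c⟩
  | inv_mul_cancel g hg y hy ih =>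
    obtain ⟨a, b, k, c, rfl⟩ := ih
    obtain ⟨i, rfl⟩ := hg
    cases i with
    | z =>
      refine ⟨a + 1, b, k, c, ?_⟩
      rw [show (PresentedGroup.of Gen.z : P m)⁻¹ = Zc m from z_inv m, ruleZ]
    | s0 =>
      refine ⟨a, b + 1, k, c, ?_⟩
      rw [show (PresentedGroup.of Gen.s0 : P m)⁻¹ = S0c m from s0_inv m, ruleS0]
    | s1 =>
      refine ⟨a + b, b, (m - 1) * k, c + 1, ?_⟩
      rw [show (PresentedGroup.of Gen.s1 : P m)⁻¹ = S1c m from s1_inv m, ruleS1 m hm]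
    | sm =>
      refine ⟨a + b, b, (m - 1) + (m - 1) * k, c + 1, ?_⟩
      rw [show (PresentedGroup.of Gen.sm : P m)⁻¹ = Smc m from sm_inv m, ruleSm m hm]

lemma Fmod (m : ℕ) (a b k c : ℕ) :
    F m a b k c = F m (a % 2) (b % 2) (k % m) (c % 2) := by
  rw [F, F]
  conv_lhs => rw [pow_eq_pow_mod a (z_sq' m), pow_eq_pow_mod b (s0_sq' m),
    pow_eq_pow_mod k (rot_pow' m), pow_eq_pow_mod c (s1_sq' m)]

def Phi (m : ℕ) (p : Fin 2 × Fin 2 × Fin m × Fin 2) : P m :=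
  F m p.1.val p.2.1.val p.2.2.1.val p.2.2.2.val

lemma Phi_surj (m : ℕ) (hm : 1 ≤ m) : Function.Surjective (Phi m) := by
  intro x
  obtain ⟨a, b, k, c, rfl⟩ := span m hm x
  refine ⟨⟨⟨a % 2, Nat.mod_lt a (by norm_num)⟩, ⟨b % 2, Nat.mod_lt b (by norm_num)⟩,
    ⟨k % m, Nat.mod_lt k (by omega)⟩, ⟨c % 2, Nat.mod_lt c (by norm_num)⟩⟩, ?_⟩
  exact (Fmod m a b k c).symm

end WposOddAux


/-- For odd `m ≥ 3`, the positive double covering `Ŵ⁺` of `ℤ₂ × D_{2m}`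
is a finite group of order `8m`. -/
theorem WposOdd_card (m : ℕ) (hm : 3 ≤ m) (hodd : Odd m) :
    Finite (PresentedGroup (relsOddPos m)) ∧
      Nat.card (PresentedGroup (relsOddPos m)) = 8 * m := by

  haveI : NeZero m := ⟨by omega⟩
  have hm1 : 1 ≤ m := by omega
  have hsurjPhi := WposOddAux.Phi_surj m hm1
  have hfin : Finite (PresentedGroup (relsOddPos m)) := Finite.of_surjective _ hsurjPhi
  refine ⟨hfin, ?_⟩
  have hcard : Nat.card (Fin 2 × Fin 2 × Fin m × Fin 2) = 8 * m := by
    rw [Nat.card_eq_fintype_card]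
    simp [Fintype.card_prod]
    ring
  have hle1 : Nat.card (PresentedGroup (relsOddPos m)) ≤ 8 * m :=
    hcard ▸ Nat.card_le_card_of_surjective _ hsurjPhi
  have hle2 : 8 * m ≤ Nat.card (PresentedGroup (relsOddPos m)) := by
    have h := Nat.card_le_card_of_surjective _ (WposOddAux.piH_surj m)
    rwa [WposOddAux.card_Gt m] at h
  omega
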